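/- Let A be a Banach algebra, B a right Banach A-module with action π_r : B × A → B, T : A → B a bounded linear map, and define the bounded bilinear map m : A × A → B by m(a₁,a₂) = π_r(T(a₁), a₂). Then T**(Z₁(m)) ⊆ Z_{A**}(B**), where T** : A** → B** is the second adjoint of T and Z_{A**}(B**) = {b'' ∈ B** : a'' ↦ π_r***(b'', a'') is weak*-weak* continuous from A** to B**}. -/

import Mathlib

open Filter Topology ContinuousLinearMap NormedSpace

/-- The topological dual of a normed space (the older Mathlib's `NormedSpace.Dual`, removed since;
restored here with its old definition). -/
abbrev NormedSpace.Dual (𝕜 : Type*) [NontriviallyNormedField 𝕜] (E : Type*) [SeminormedAddCommGroup E]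
    [NormedSpace 𝕜 E] : Type _ :=
  E →L[𝕜] 𝕜

noncomputable section

variable {X Y Z W E F : Type*}
  [NormedAddCommGroup X] [NormedSpace ℂ X]
  [NormedAddCommGroup Y] [NormedSpace ℂ Y]
  [NormedAddCommGroup Z] [NormedSpace ℂ Z]
  [NormedAddCommGroup E] [NormedSpace ℂ E]
  [NormedAddCommGroup F] [NormedSpace ℂ F]

/-- The (first) Arens adjoint `m* : Z* × X → Y*` of a bounded bilinear map
`m : X × Y → Z`, characterized by `⟨m*(z',x), y⟩ = ⟨z', m(x,y)⟩`. -/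
noncomputable def arensAdj (m : X →L[ℂ] Y →L[ℂ] Z) :
    Dual ℂ Z →L[ℂ] X →L[ℂ] Dual ℂ Y :=
  ((ContinuousLinearMap.compL ℂ Y Z ℂ).flip.comp m).flip

/-- The Arens triple adjoint `m*** : X** × Y** → Z**`. -/
noncomputable def arensExt (m : X →L[ℂ] Y →L[ℂ] Z) :
    Dual ℂ (Dual ℂ X) →L[ℂ] Dual ℂ (Dual ℂ Y) →L[ℂ] Dual ℂ (Dual ℂ Z) :=
  arensAdj (arensAdj (arensAdj m))

/-- A map between dual spaces is weak*-weak* continuous. -/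
def IsWeakStarCont (f : Dual ℂ E → Dual ℂ F) : Prop :=
  Continuous fun x : WeakDual ℂ E =>
    StrongDual.toWeakDual (f (WeakDual.toStrongDual x))

/-- First topological center of a bounded bilinear map. -/
def arensZ1 (m : X →L[ℂ] Y →L[ℂ] Z) : Set (Dual ℂ (Dual ℂ X)) :=
  {x'' | IsWeakStarCont fun y'' => arensExt m x'' y''}

/-- Second topological center of a bounded bilinear map. -/
def arensZ2 (m : X →L[ℂ] Y →L[ℂ] Z) : Set (Dual ℂ (Dual ℂ Y)) :=
  {y'' | IsWeakStarCont fun x'' => arensExt m.flip y'' x''}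

/-- `m` is Arens regular when `m*** = m^{t***t}`. -/
def ArensRegular (m : X →L[ℂ] Y →L[ℂ] Z) : Prop :=
  arensExt m = (arensExt m.flip).flip

/-- `m` is left strongly Arens irregular when `Z₁(m)` is the canonical image of `X`. -/
def LeftStronglyArensIrregular (m : X →L[ℂ] Y →L[ℂ] Z) : Prop :=
  arensZ1 m = Set.range (NormedSpace.inclusionInDoubleDual ℂ X)

/-- `m` is right strongly Arens irregular when `Z₂(m)` is the canonical image of `Y`. -/
def RightStronglyArensIrregular (m : X →L[ℂ] Y →L[ℂ] Z) : Prop :=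
  arensZ2 m = Set.range (NormedSpace.inclusionInDoubleDual ℂ Y)

/-- The adjoint `T* : F* → E*` of a bounded linear map. -/
noncomputable def dualMap' (T : E →L[ℂ] F) : Dual ℂ F →L[ℂ] Dual ℂ E :=
  (ContinuousLinearMap.compL ℂ E F ℂ).flip T

/-- The second adjoint `T** : E** → F**` of a bounded linear map. -/
noncomputable def bidualMap (T : E →L[ℂ] F) :
    Dual ℂ (Dual ℂ E) →L[ℂ] Dual ℂ (Dual ℂ F) :=
  dualMap' (dualMap' T)

/-- A net in `A`: a function from a nonempty directed preorder to `A`. -/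
structure Net (A : Type*) where
  ι : Type
  [pre : Preorder ι]
  [dir : IsDirected ι (· ≤ ·)]
  [ne : Nonempty ι]
  e : ι → A

attribute [instance] Net.pre Net.dir Net.ne

/-- A bounded approximate identity for a (non-unital) Banach algebra. -/
def IsBAI {A : Type*} [NonUnitalNormedRing A] (N : Net A) : Prop :=
  (∃ C : ℝ, ∀ i, ‖N.e i‖ ≤ C) ∧
  (∀ a : A, Tendsto (fun i => N.e i * a) atTop (𝓝 a)) ∧
  (∀ a : A, Tendsto (fun i => a * N.e i) atTop (𝓝 a))

end

section ArensComp

variable {W X Y Z : Type*}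
  [NormedAddCommGroup W] [NormedSpace ℂ W]
  [NormedAddCommGroup X] [NormedSpace ℂ X]
  [NormedAddCommGroup Y] [NormedSpace ℂ Y]
  [NormedAddCommGroup Z] [NormedSpace ℂ Z]

theorem arensExt_comp (m : X →L[ℂ] Y →L[ℂ] Z) (T : W →L[ℂ] X) (x'' : Dual ℂ (Dual ℂ W)) :
    arensExt (m.comp T) x'' = arensExt m (bidualMap T x'') :=
  rfl

theorem mem_arensZ1_comp_iff (m : X →L[ℂ] Y →L[ℂ] Z) (T : W →L[ℂ] X) (x'' : Dual ℂ (Dual ℂ W)) :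
    x'' ∈ arensZ1 (m.comp T) ↔ bidualMap T x'' ∈ arensZ1 m := by
  simp only [arensZ1, Set.mem_ofPred_eq, arensExt_comp]

theorem image_bidualMap_arensZ1_comp_subset (m : X →L[ℂ] Y →L[ℂ] Z) (T : W →L[ℂ] X) :
    bidualMap T '' arensZ1 (m.comp T) ⊆ arensZ1 m := by
  rintro _ ⟨x'', hx'', rfl⟩
  exact (mem_arensZ1_comp_iff m T x'').mp hx''

end ArensComp

theorem stmt_6_general {A B : Type*} [NonUnitalNormedRing A] [NormedSpace ℂ A] [NormedAddCommGroup B] [NormedSpace ℂ B]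
    (πr : B →L[ℂ] A →L[ℂ] B)
    (T : A →L[ℂ] B) :
    bidualMap T '' arensZ1 (πr.comp T) ⊆
      {b'' : Dual ℂ (Dual ℂ B) | IsWeakStarCont fun a'' => arensExt πr b'' a''} :=
  image_bidualMap_arensZ1_comp_subset πr T

/-- For `m(a₁,a₂) = π_r(T(a₁),a₂)` one has `T**(Z₁(m)) ⊆ Z_{A**}(B**)`. -/
theorem stmt_6 {A B : Type*} [NonUnitalNormedRing A] [NormedSpace ℂ A] [IsScalarTower ℂ A A] [SMulCommClass ℂ A A] [CompleteSpace A] [NormedAddCommGroup B] [NormedSpace ℂ B] [CompleteSpace B]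
    (πr : B →L[ℂ] A →L[ℂ] B)
    (hmod : ∀ (b : B) (a₁ a₂ : A), πr (πr b a₁) a₂ = πr b (a₁ * a₂))
    (T : A →L[ℂ] B) :
    bidualMap T '' arensZ1 (πr.comp T) ⊆
      {b'' : Dual ℂ (Dual ℂ B) | IsWeakStarCont fun a'' => arensExt πr b'' a''} :=
  stmt_6_general πr T
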